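/- Let H be a separable infinite-dimensional complex Hilbert space and let T ∈ L(H). Then for all natural numbers m, n ≥ 1, the pair (T^m, T^n) is not a universal commuting pair. -/
import Mathlib


noncomputable section

/-- A commuting pair `(U₁, U₂)` is a *universal commuting pair* if for every commuting pair
`(S₁, S₂)` there are a nonzero `c ∈ ℂ`, a closed subspace `M` invariant under both `U₁` and
`U₂`, and a continuous linear isomorphism `V : H ≃ M` with `Uᵢ (V x) = c • V (Sᵢ x)` for
all `x` and `i = 1, 2`. -/
def IsUniversalPair {H : Type*} [NormedAddCommGroup H] [InnerProductSpace ℂ H]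
    (U₁ U₂ : H →L[ℂ] H) : Prop :=
  U₁.comp U₂ = U₂.comp U₁ ∧
  ∀ S₁ S₂ : H →L[ℂ] H, S₁.comp S₂ = S₂.comp S₁ →
    ∃ M : Submodule ℂ H, IsClosed (M : Set H) ∧
      (∀ x ∈ M, U₁ x ∈ M) ∧ (∀ x ∈ M, U₂ x ∈ M) ∧
      ∃ c : ℂ, c ≠ 0 ∧ ∃ V : H ≃L[ℂ] M,
        (∀ x : H, U₁ (V x : H) = c • ((V (S₁ x) : H))) ∧
        (∀ x : H, U₂ (V x : H) = c • ((V (S₂ x) : H)))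

/-- For any `T ∈ L(H)` and any `m, n ≥ 1`, the pair `(T^m, T^n)` is not a universal
commuting pair. -/
theorem not_universalPair_powers {H : Type*} [NormedAddCommGroup H]
    [InnerProductSpace ℂ H] [CompleteSpace H] [TopologicalSpace.SeparableSpace H]
    (hinf : ¬ FiniteDimensional ℂ H)
    (T : H →L[ℂ] H) :
    ∀ m n : ℕ, 1 ≤ m → 1 ≤ n → ¬ IsUniversalPair (T ^ m) (T ^ n) := by
  intro m n hm hn hU
  obtain ⟨-, h⟩ := hU
  obtain ⟨M, -, -, -, c, hc, V, hV1, hV2⟩ := h 1 0 (by ext x; simp)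
  have hnt : Nontrivial H := by
    by_contra h'
    rw [not_nontrivial_iff_subsingleton] at h'
    exact hinf inferInstance
  obtain ⟨x, hx⟩ := exists_ne (0 : H)
  have h1 : (T ^ m) ((V x : H)) = c • (V x : H) := by simpa using hV1 x
  have h2 : (T ^ n) ((V x : H)) = 0 := by simpa using hV2 x
  have hpow1 : ∀ k : ℕ, ((T ^ m) ^ k) ((V x : H)) = c ^ k • (V x : H) := by
    intro k
    induction k with
    | zero => simp
    | succ k ih =>
      calc ((T ^ m) ^ (k + 1)) ((V x : H))
          = ((T ^ m) ^ k) ((T ^ m) ((V x : H))) := by rw [pow_succ]; rfl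
        _ = ((T ^ m) ^ k) (c • (V x : H)) := by rw [h1]
        _ = c • (((T ^ m) ^ k) ((V x : H))) := by simp
        _ = c ^ (k + 1) • (V x : H) := by rw [ih, smul_smul, pow_succ, mul_comm]
  have hpow2 : ((T ^ n) ^ m) ((V x : H)) = 0 := by
    rw [show m = (m - 1) + 1 from (Nat.succ_pred_eq_of_pos hm).symm, pow_succ]
    show ((T ^ n) ^ (m - 1)) ((T ^ n) ((V x : H))) = 0
    rw [h2, map_zero]
  have heq : (T ^ m) ^ n = (T ^ n) ^ m := by
    rw [← pow_mul, ← pow_mul, Nat.mul_comm]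
  have hz : c ^ n • (V x : H) = 0 := by rw [← hpow1 n, heq, hpow2]
  have hVx : (V x : H) ≠ 0 := by
    intro h0
    exact hx (V.injective (Subtype.ext (by simpa using h0)))
  rcases smul_eq_zero.mp hz with h' | h'
  · exact pow_ne_zero n hc h'
  · exact hVx h'

end
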